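/- Let G be a Berge graph with a connected 2-join (X1, X2) with split (X1,X2,A1,B1,A2,B2). Then all induced paths with one end in A1, one end in B1, and no interior vertex in A1 ∪ B1, as well as all induced paths with one end in A2, one end in B2, and no interior vertex in A2 ∪ B2, have lengths of the same parity. -/

import Mathlib

open SimpleGraph

universe u

namespace BSP

variable {V : Type*}

/-- A walk is induced: any two adjacent vertices of its support are consecutive on it. -/
def IsInducedWalk (G : SimpleGraph V) {u v : V} (p : G.Walk u v) : Prop :=
  ∀ x ∈ p.support, ∀ y ∈ p.support, G.Adj x y → s(x, y) ∈ p.edges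

/-- An induced path. -/
def IsInducedPath (G : SimpleGraph V) {u v : V} (p : G.Walk u v) : Prop :=
  p.IsPath ∧ IsInducedWalk G p

/-- An induced cycle. -/
def IsInducedCycle (G : SimpleGraph V) {u : V} (p : G.Walk u u) : Prop :=
  p.IsCycle ∧ IsInducedWalk G p

/-- `G` has an odd hole: an induced odd cycle of length at least 5. -/
def HasOddHole (G : SimpleGraph V) : Prop :=
  ∃ (u : V) (p : G.Walk u u), IsInducedCycle G p ∧ Odd p.length ∧ 5 ≤ p.length

/-- A graph is Berge if neither it nor its complement has an odd hole. -/
def Berge (G : SimpleGraph V) : Prop := ¬ HasOddHole G ∧ ¬ HasOddHole Gᶜ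

/-- `x` is an interior vertex of the walk `p`. -/
def Interior {G : SimpleGraph V} {u v : V} (p : G.Walk u v) (x : V) : Prop :=
  x ∈ p.support ∧ x ≠ u ∧ x ≠ v

/-- A skew partition `(A, B)` of `G`. -/
def IsSkewPartition (G : SimpleGraph V) (A B : Set V) : Prop :=
  A.Nonempty ∧ B.Nonempty ∧ Disjoint A B ∧ A ∪ B = Set.univ ∧
  ¬ (G.induce A).Connected ∧ ¬ ((Gᶜ).induce B).Connected

/-- A balanced skew partition. -/
def IsBalancedSkewPartition (G : SimpleGraph V) (A B : Set V) : Prop :=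
  IsSkewPartition G A B ∧
  (∀ (x y : V) (p : G.Walk x y), IsInducedPath G p → 2 ≤ p.length →
     x ∈ B → y ∈ B → (∀ z, Interior p z → z ∈ A) → Even p.length) ∧
  (∀ (x y : V) (q : (Gᶜ).Walk x y), IsInducedPath Gᶜ q → 2 ≤ q.length →
     x ∈ A → y ∈ A → (∀ z, Interior q z → z ∈ B) → Even q.length)

def HasBalancedSkewPartition (G : SimpleGraph V) : Prop :=
  ∃ A B : Set V, IsBalancedSkewPartition G A B

def IsSkewCutset (G : SimpleGraph V) (B : Set V) : Prop :=
  IsSkewPartition G Bᶜ B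

def IsBalancedSkewCutset (G : SimpleGraph V) (B : Set V) : Prop :=
  IsBalancedSkewPartition G Bᶜ B

/-- `C` is a cutset of `G`. -/
def IsCutset (G : SimpleGraph V) (C : Set V) : Prop :=
  ¬ (G.induce (Cᶜ : Set V)).Connected

/-- A star: a set with a vertex adjacent to all the others in it. -/
def IsStar (G : SimpleGraph V) (B : Set V) : Prop :=
  ∃ x ∈ B, ∀ y ∈ B, y ≠ x → G.Adj x y

def HasStarCutset (G : SimpleGraph V) : Prop :=
  ∃ B : Set V, IsStar G B ∧ IsCutset G B

/-- A 2-join of `G` with split `(X1, X2, A1, B1, A2, B2)`. -/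
def IsTwoJoinSplit (G : SimpleGraph V) (X1 X2 A1 B1 A2 B2 : Set V) : Prop :=
  Disjoint X1 X2 ∧ X1 ∪ X2 = Set.univ ∧
  A1 ⊆ X1 ∧ B1 ⊆ X1 ∧ A2 ⊆ X2 ∧ B2 ⊆ X2 ∧
  Disjoint A1 B1 ∧ Disjoint A2 B2 ∧
  A1.Nonempty ∧ B1.Nonempty ∧ A2.Nonempty ∧ B2.Nonempty ∧
  (∀ a1 ∈ A1, ∀ a2 ∈ A2, G.Adj a1 a2) ∧
  (∀ b1 ∈ B1, ∀ b2 ∈ B2, G.Adj b1 b2) ∧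
  (∀ x ∈ X1, ∀ y ∈ X2, G.Adj x y → (x ∈ A1 ∧ y ∈ A2) ∨ (x ∈ B1 ∧ y ∈ B2))

/-- Reachability inside a set of vertices. -/
def ReachIn (G : SimpleGraph V) (S : Set V) (u v : V) : Prop :=
  ∃ p : G.Walk u v, ∀ x ∈ p.support, x ∈ S

/-- Every component of `G[X]` meets both `A` and `B`. -/
def SideConnected (G : SimpleGraph V) (X A B : Set V) : Prop :=
  ∀ v ∈ X, (∃ a ∈ A, ReachIn G X v a) ∧ (∃ b ∈ B, ReachIn G X v b)

def IsConnectedTwoJoin (G : SimpleGraph V) (X1 X2 A1 B1 A2 B2 : Set V) : Prop :=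
  IsTwoJoinSplit G X1 X2 A1 B1 A2 B2 ∧
  SideConnected G X1 A1 B1 ∧ SideConnected G X2 A2 B2

/-- `X` has at least 3 vertices and is not a path of length 2 from `A` to `B`
with interior in `X \ (A ∪ B)`. -/
def SideSubstantial (G : SimpleGraph V) (X A B : Set V) : Prop :=
  3 ≤ X.ncard ∧
  ¬ ∃ a ∈ A, ∃ b ∈ B, ∃ c ∈ X \ (A ∪ B),
      X = {a, c, b} ∧ G.Adj a c ∧ G.Adj c b ∧ ¬ G.Adj a b

def IsSubstantialTwoJoin (G : SimpleGraph V) (X1 X2 A1 B1 A2 B2 : Set V) : Prop :=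
  IsTwoJoinSplit G X1 X2 A1 B1 A2 B2 ∧
  SideSubstantial G X1 A1 B1 ∧ SideSubstantial G X2 A2 B2

def IsProperTwoJoin (G : SimpleGraph V) (X1 X2 A1 B1 A2 B2 : Set V) : Prop :=
  IsConnectedTwoJoin G X1 X2 A1 B1 A2 B2 ∧
  SideSubstantial G X1 A1 B1 ∧ SideSubstantial G X2 A2 B2

/-- A degenerate 2-join. -/
def IsDegenerate (G : SimpleGraph V) (X1 X2 A1 B1 A2 B2 : Set V) : Prop :=
  (∃ v ∈ A1, ∀ w ∈ X1 \ A1, ¬ G.Adj v w) ∨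
  (∃ v ∈ B1, ∀ w ∈ X1 \ B1, ¬ G.Adj v w) ∨
  (∃ v ∈ A2, ∀ w ∈ X2 \ A2, ¬ G.Adj v w) ∨
  (∃ v ∈ B2, ∀ w ∈ X2 \ B2, ¬ G.Adj v w) ∨
  IsSkewCutset G (A1 ∪ A2) ∨ IsSkewCutset G (B1 ∪ B2) ∨
  ¬ (SideConnected G X1 A1 B1 ∧ SideConnected G X2 A2 B2) ∨
  (∃ v ∈ A1, ∀ w ∈ B1, G.Adj v w) ∨ (∃ v ∈ B1, ∀ w ∈ A1, G.Adj v w) ∨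
  (∃ v ∈ A2, ∀ w ∈ B2, G.Adj v w) ∨ (∃ v ∈ B2, ∀ w ∈ A2, G.Adj v w) ∨
  (∃ v ∈ X1 \ (A1 ∪ B1), ∀ w ∈ A1 ∪ B1, G.Adj v w) ∨
  (∃ v ∈ X2 \ (A2 ∪ B2), ∀ w ∈ A2 ∪ B2, G.Adj v w)

/-- An induced path from `A` to `B` with no interior vertex in `A ∪ B`. -/
def CrossPath (G : SimpleGraph V) (A B : Set V) {u v : V} (p : G.Walk u v) : Prop :=
  IsInducedPath G p ∧ u ∈ A ∧ v ∈ B ∧ ∀ x, Interior p x → x ∉ A ∪ B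

/-- An induced path of length at least 2 with both ends in `S` and no interior vertex in `S`. -/
def OutgoingPath (G : SimpleGraph V) (S : Set V) {u v : V} (p : G.Walk u v) : Prop :=
  IsInducedPath G p ∧ 2 ≤ p.length ∧ u ∈ S ∧ v ∈ S ∧ ∀ x, Interior p x → x ∉ S

def claw : SimpleGraph (Fin 1 ⊕ Fin 3) := completeBipartiteGraph (Fin 1) (Fin 3)

def diamond : SimpleGraph (Fin 4) := (⊤ : SimpleGraph (Fin 4)).deleteEdges {s(0, 1)}

def ClawFree (G : SimpleGraph V) : Prop := IsEmpty (claw ↪g G)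

def DiamondFree (G : SimpleGraph V) : Prop := IsEmpty (diamond ↪g G)

def IsLineGraphOfBipartite {V : Type u} (G : SimpleGraph V) : Prop :=
  ∃ (W : Type u) (H : SimpleGraph W), H.Colorable 2 ∧ Nonempty (G ≃g H.lineGraph)

/-- Double split graph structure. -/
structure IsDoubleSplit (G : SimpleGraph V) (m n : ℕ)
    (a b : Fin m → V) (c d : Fin n → V) : Prop where
  hm : 2 ≤ m
  hn : 2 ≤ n
  inj : Function.Injective (Sum.elim (Sum.elim a b) (Sum.elim c d))
  cover : Set.range a ∪ Set.range b ∪ Set.range c ∪ Set.range d = Set.univ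
  hab : ∀ i, G.Adj (a i) (b i)
  habne : ∀ i i', i ≠ i' →
    ¬ G.Adj (a i) (a i') ∧ ¬ G.Adj (a i) (b i') ∧ ¬ G.Adj (b i) (b i')
  hcd : ∀ j, ¬ G.Adj (c j) (d j)
  hcdall : ∀ j j', j ≠ j' →
    G.Adj (c j) (c j') ∧ G.Adj (c j) (d j') ∧ G.Adj (d j) (d j')
  cross : ∀ i j,
    (G.Adj (a i) (c j) ∧ G.Adj (b i) (d j) ∧ ¬ G.Adj (a i) (d j) ∧ ¬ G.Adj (b i) (c j)) ∨
    (G.Adj (a i) (d j) ∧ G.Adj (b i) (c j) ∧ ¬ G.Adj (a i) (c j) ∧ ¬ G.Adj (b i) (d j))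

/-- Path-double split graph structure. -/
structure IsPathDoubleSplit (G : SimpleGraph V) (m n : ℕ)
    (a b : Fin m → V) (c d : Fin n → V) (E : Set V) : Prop where
  hm : 2 ≤ m
  hn : 2 ≤ n
  inj : Function.Injective (Sum.elim (Sum.elim a b) (Sum.elim c d))
  notinE : ∀ i, a i ∉ E ∧ b i ∉ E
  notinE' : ∀ j, c j ∉ E ∧ d j ∉ E
  cover : Set.range a ∪ Set.range b ∪ Set.range c ∪ Set.range d ∪ E = Set.univ
  hE : ∀ v ∈ E, (G.neighborSet v).ncard = 2 ∧
    ∃ (i : Fin m) (p : G.Walk (a i) (b i)), IsInducedPath G p ∧ Odd p.length ∧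
      (∀ x, Interior p x → x ∈ E) ∧ v ∈ p.support
  hpath : ∀ i, ∃! p : G.Walk (a i) (b i),
    IsInducedPath G p ∧ Odd p.length ∧ (∀ x, Interior p x → x ∈ E)
  habne : ∀ i i', i ≠ i' →
    ¬ G.Adj (a i) (a i') ∧ ¬ G.Adj (a i) (b i') ∧ ¬ G.Adj (b i) (b i')
  hcd : ∀ j, ¬ G.Adj (c j) (d j)
  hcdall : ∀ j j', j ≠ j' →
    G.Adj (c j) (c j') ∧ G.Adj (c j) (d j') ∧ G.Adj (d j) (d j')
  cross : ∀ i j,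
    (G.Adj (a i) (c j) ∧ G.Adj (b i) (d j) ∧ ¬ G.Adj (a i) (d j) ∧ ¬ G.Adj (b i) (c j)) ∨
    (G.Adj (a i) (d j) ∧ G.Adj (b i) (c j) ∧ ¬ G.Adj (a i) (c j) ∧ ¬ G.Adj (b i) (d j))

/-- Path-cobipartite graph. -/
def IsPathCobipartite (G : SimpleGraph V) : Prop :=
  Berge G ∧ ∃ A B P : Set V,
    Disjoint A B ∧ Disjoint A P ∧ Disjoint B P ∧ A ∪ B ∪ P = Set.univ ∧
    A.Nonempty ∧ B.Nonempty ∧ G.IsClique A ∧ G.IsClique B ∧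
    ∀ v ∈ P, (G.neighborSet v).ncard = 2 ∧
      ∃ a ∈ A, ∃ b ∈ B, ∃ p : G.Walk a b, IsInducedPath G p ∧ Odd p.length ∧
        Interior p v ∧ (∀ x, Interior p x → x ∈ P) ∧
        (∀ w, G.Adj a w → w ∈ A ∪ P) ∧ (∀ w, G.Adj b w → w ∈ B ∪ P) ∧
        (∀ (a' b' : V), a' ∈ A → b' ∈ B → ∀ p' : G.Walk a' b',
          IsInducedPath G p' → Odd p'.length → Interior p' v →
          (∀ x, Interior p' x → x ∈ P) →
          {x | x ∈ p'.support} = {x | x ∈ p.support})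

/-- `X` induces a path of `G` with one end in `A`, the other in `B` and interior
outside `A ∪ B`. -/
def PathSideOn (G : SimpleGraph V) (X A B : Set V) : Prop :=
  ∃ a ∈ A, ∃ b ∈ B, ∃ p : G.Walk a b, IsInducedPath G p ∧
    {x | x ∈ p.support} = X ∧ ∀ x, Interior p x → x ∉ A ∪ B

/-- The block of a 2-join: keep the side `X` (with attachments `A`, `B`) and replace the
other side by a path `p_0, …, p_k`, `p_0` complete to `A` and `p_k` complete to `B`. -/
def blockGraph (G : SimpleGraph V) (X A B : Set V) (k : ℕ) :
    SimpleGraph (↥X ⊕ Fin (k + 1)) where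
  Adj x y :=
    match x, y with
    | Sum.inl u, Sum.inl v => G.Adj u v
    | Sum.inl u, Sum.inr i => ((i : ℕ) = 0 ∧ (u : V) ∈ A) ∨ ((i : ℕ) = k ∧ (u : V) ∈ B)
    | Sum.inr i, Sum.inl u => ((i : ℕ) = 0 ∧ (u : V) ∈ A) ∨ ((i : ℕ) = k ∧ (u : V) ∈ B)
    | Sum.inr i, Sum.inr j => (i : ℕ) + 1 = (j : ℕ) ∨ (j : ℕ) + 1 = (i : ℕ)
  symm := ⟨by
    rintro (u | i) (v | j) h
    · exact h.symm
    · exact h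
    · exact h
    · omega⟩
  loopless := ⟨by
    rintro (u | i) h
    · exact G.loopless.irrefl _ h
    · omega⟩

/-- The graph `G'` obtained from a Bienstock graph `G` by adding two vertices
(`Sum.inr false` and `Sum.inr true`), each adjacent exactly to `u` and `s`. -/
def bienstockExt (G : SimpleGraph V) (u s : V) : SimpleGraph (V ⊕ Bool) where
  Adj x y :=
    match x, y with
    | Sum.inl p, Sum.inl q => G.Adj p q
    | Sum.inl p, Sum.inr _ => p = u ∨ p = s
    | Sum.inr _, Sum.inl q => q = u ∨ q = s
    | Sum.inr _, Sum.inr _ => False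
  symm := ⟨by
    rintro (p | i) (q | j) h
    · exact h.symm
    · exact h
    · exact h
    · exact h⟩
  loopless := ⟨by
    rintro (p | i) h
    · exact G.loopless.irrefl _ h
    · exact h⟩

end BSP

/-! A shortest walk inside a side `Xᵢ` from `Aᵢ` to `Bᵢ` is an induced path with no interior
vertex in `Aᵢ ∪ Bᵢ`, so each side of a connected 2-join contains such a path. Two such paths,
`P` in `X1` and `Q` in `X2`, closed up by an edge `a1a2` and an edge `b1b2`, form a hole of length
`|P| + |Q| + 2 ≥ 4`, so in a Berge graph `|P|` and `|Q|` have the same parity. Finally, a path from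
`A1` to `B1` with no interior vertex in `A1 ∪ B1` either stays in `X1`, or its first and last edges
cross the 2-join and what lies between them is such a path of `X2`, shorter by two. -/

namespace SimpleGraph.Walk

variable {V : Type*} {G : SimpleGraph V} {u v : V}

lemma IsPath.mem_of_boundary_only_at_end {X S : Set V} {p : G.Walk u v} (hp : p.IsPath)
    (hu : u ∈ X) (hbd : ∀ x y, x ∈ X → y ∉ X → G.Adj x y → x ∈ S ∨ y ∈ S)
    (hS : ∀ z ∈ p.support, z ∈ S → z = v) {z : V} (hz : z ∈ p.support) (hzv : z ≠ v) :
    z ∈ X := by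
  induction p with
  | nil => simp_all
  | @cons u y v h p ih =>
    rw [support_cons, List.mem_cons] at hz
    rcases hz with rfl | hz
    · exact hu
    by_cases hy : y ∈ X
    · exact ih hp.of_cons hy (fun w hw => hS w (List.mem_cons_of_mem _ hw)) hz hzv
    rcases hbd u y hu hy h with huS | hyS
    · obtain rfl := hS u (start_mem_support _) huS
      exact absurd (end_mem_support p) ((cons_isPath_iff h p).mp hp).2
    · obtain rfl := hS y (by simp) hyS
      obtain rfl := eq_nil_iff_nil.mpr (isPath_iff_nil.mp hp.of_cons)
      simp_all

lemma length_append_cons_lt {x y : V} (p : G.Walk u x) (m : G.Walk x y) (q : G.Walk y v)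
    (h : G.Adj x y) (hm : s(x, y) ∉ m.edges) :
    (p.append (cons h q)).length < (p.append (m.append q)).length := by
  have : 2 ≤ m.length := by
    rcases m with _ | ⟨h₁, _ | ⟨h₂, m⟩⟩
    · exact absurd rfl h.ne
    · simp at hm
    · simp
  simp only [length_append, length_cons]
  omega

lemma exists_shorter_of_adj_of_notMem_edges {p : G.Walk u v} {x y : V} (hx : x ∈ p.support)
    (hy : y ∈ p.support) (h : G.Adj x y) (hxy : s(x, y) ∉ p.edges) :
    ∃ q : G.Walk u v, q.length < p.length ∧ ∀ z ∈ q.support, z ∈ p.support := by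
  obtain ⟨p₁, p₂, rfl⟩ := mem_support_iff_exists_append.mp hx
  rcases (mem_support_append_iff _ _).mp hy with hy | hy
  · obtain ⟨q₁, q₂, rfl⟩ := mem_support_iff_exists_append.mp hy
    refine ⟨q₁.append (cons h.symm p₂), ?_, ?_⟩
    · rw [← append_assoc]
      refine length_append_cons_lt _ _ _ _ fun hm => hxy ?_
      simp [edges_append, (Sym2.eq_swap ▸ hm : s(x, y) ∈ q₂.edges)]
    · intro z hz
      simp only [mem_support_append_iff, support_cons, List.mem_cons] at hz ⊢
      aesop
  · obtain ⟨q₁, q₂, rfl⟩ := mem_support_iff_exists_append.mp hy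
    refine ⟨p₁.append (cons h q₂), length_append_cons_lt _ _ _ _ fun hm => hxy ?_, ?_⟩
    · simp [edges_append, hm]
    · intro z hz
      simp only [mem_support_append_iff, support_cons, List.mem_cons] at hz ⊢
      aesop

lemma IsPath.isCycle_cons_append_cons_reverse {a₁ b₁ a₂ b₂ : V} {p : G.Walk a₁ b₁}
    {q : G.Walk a₂ b₂} (hp : p.IsPath) (hq : q.IsPath) (hpq : p.support.Disjoint q.support)
    (hne : a₂ ≠ b₂) (hA : G.Adj a₁ a₂) (hB : G.Adj b₂ b₁) :
    (cons hA (q.append (cons hB p.reverse))).IsCycle := by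
  rw [cons_isCycle_iff]
  constructor
  · rw [isPath_def, support_append, support_cons, List.tail_cons, support_reverse]
    exact hq.support_nodup.append (List.nodup_reverse.mpr hp.support_nodup)
      (by simpa [List.disjoint_reverse_right] using hpq.symm)
  · intro h
    simp only [edges_append, edges_cons, edges_reverse, List.mem_append, List.mem_cons,
      List.mem_reverse, Sym2.eq, Sym2.rel_iff'] at h
    rcases h with h | (⟨rfl, -⟩ | ⟨rfl, rfl⟩) | h
    · exact hpq (start_mem_support p) (fst_mem_support_of_mem_edges q h)
    · exact hpq (start_mem_support p) (end_mem_support q)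
    · exact hne rfl
    · exact hpq (snd_mem_support_of_mem_edges p h) (start_mem_support q)

end SimpleGraph.Walk

namespace BSP

open SimpleGraph.Walk

variable {V : Type*} {G : SimpleGraph V}

lemma IsInducedWalk.of_cons_concat {u x y v : V} {h : G.Adj u x} {q : G.Walk x y}
    {h' : G.Adj y v} (hp : IsInducedWalk G (cons h (q.concat h'))) (hu : u ∉ q.support)
    (hv : v ∉ q.support) : IsInducedWalk G q := by
  intro a ha b hb hab
  have := hp a (by simp [ha]) b (by simp [hb]) hab
  simp only [edges_cons, edges_concat, List.mem_cons, List.concat_eq_append, List.mem_append,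
    List.not_mem_nil, or_false, Sym2.eq_iff] at this
  rcases this with (⟨hau, -⟩ | ⟨-, hbu⟩) | this | (⟨-, hbv⟩ | ⟨hav, -⟩)
  exacts [(hu (hau ▸ ha)).elim, (hu (hbu ▸ hb)).elim, this, (hv (hbv ▸ hb)).elim,
    (hv (hav ▸ ha)).elim]

section CrossPath

variable {A B : Set V} {u v z : V} {p : G.Walk u v}

lemma CrossPath.ne (hp : CrossPath G A B p) (hAB : Disjoint A B) : u ≠ v :=
  fun h => hAB.ne_of_mem hp.2.1 (h ▸ hp.2.2.1) h

lemma CrossPath.eq_start_of_mem (hp : CrossPath G A B p) (hAB : Disjoint A B)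
    (hz : z ∈ p.support) (hzA : z ∈ A) : z = u := by
  by_contra hzu
  by_cases hzv : z = v
  · exact hAB.ne_of_mem hzA (hzv ▸ hp.2.2.1) rfl
  · exact hp.2.2.2 z ⟨hz, hzu, hzv⟩ (Or.inl hzA)

lemma CrossPath.eq_end_of_mem (hp : CrossPath G A B p) (hAB : Disjoint A B)
    (hz : z ∈ p.support) (hzB : z ∈ B) : z = v := by
  by_contra hzv
  by_cases hzu : z = u
  · exact hAB.ne_of_mem (hzu ▸ hp.2.1) hzB rfl
  · exact hp.2.2.2 z ⟨hz, hzu, hzv⟩ (Or.inr hzB)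

lemma CrossPath.eq_end_of_ne_start (hp : CrossPath G A B p) (hz : z ∈ p.support) (hzu : z ≠ u)
    (hzAB : z ∈ A ∪ B) : z = v :=
  by_contra fun hzv => hp.2.2.2 z ⟨hz, hzu, hzv⟩ hzAB

end CrossPath

section Hole

variable {a₁ b₁ a₂ b₂ : V} {p : G.Walk a₁ b₁} {q : G.Walk a₂ b₂}

lemma isInducedWalk_cons_append_cons_reverse (hp : IsInducedWalk G p) (hq : IsInducedWalk G q)
    (hA : G.Adj a₁ a₂) (hB : G.Adj b₂ b₁)
    (hcross : ∀ x ∈ p.support, ∀ y ∈ q.support, G.Adj x y → x = a₁ ∧ y = a₂ ∨ x = b₁ ∧ y = b₂) :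
    IsInducedWalk G (cons hA (q.append (cons hB p.reverse))) := by
  have hmem : ∀ z ∈ (cons hA (q.append (cons hB p.reverse))).support,
      z ∈ p.support ∨ z ∈ q.support := by
    intro z hz
    simp only [support_cons, support_append, support_reverse, List.tail_cons, List.mem_cons,
      List.mem_append, List.mem_reverse] at hz
    rcases hz with rfl | hz | hz
    exacts [Or.inl (start_mem_support p), Or.inr hz, Or.inl hz]
  have hcross' : ∀ x ∈ p.support, ∀ y ∈ q.support, G.Adj x y →
      s(x, y) ∈ (cons hA (q.append (cons hB p.reverse))).edges := by
    intro x hx y hy hxy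
    rcases hcross x hx y hy hxy with ⟨rfl, rfl⟩ | ⟨rfl, rfl⟩ <;> simp [edges_append, Sym2.eq_swap]
  intro x hx y hy hxy
  rcases hmem x hx with hx | hx <;> rcases hmem y hy with hy | hy
  · simp [edges_append, hp x hx y hy hxy]
  · exact hcross' x hx y hy hxy
  · exact Sym2.eq_swap ▸ hcross' y hy x hx hxy.symm
  · simp [edges_append, hq x hx y hy hxy]

lemma even_length_add_of_not_hasOddHole (hG : ¬ HasOddHole G) (hp : IsInducedPath G p)
    (hq : IsInducedPath G q) (hpq : p.support.Disjoint q.support) (hne₁ : a₁ ≠ b₁)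
    (hne₂ : a₂ ≠ b₂) (hA : G.Adj a₁ a₂) (hB : G.Adj b₂ b₁)
    (hcross : ∀ x ∈ p.support, ∀ y ∈ q.support, G.Adj x y → x = a₁ ∧ y = a₂ ∨ x = b₁ ∧ y = b₂) :
    Even (p.length + q.length) := by
  by_contra hodd
  have hp₁ : p.length ≠ 0 := fun h => hne₁ (eq_of_length_eq_zero h)
  have hq₁ : q.length ≠ 0 := fun h => hne₂ (eq_of_length_eq_zero h)
  refine hG ⟨a₁, cons hA (q.append (cons hB p.reverse)),
    ⟨hp.1.isCycle_cons_append_cons_reverse hq.1 hpq hne₂ hA hB,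
      isInducedWalk_cons_append_cons_reverse hp.2 hq.2 hA hB hcross⟩, ?_, ?_⟩ <;>
  simp only [length_cons, length_append, length_reverse, Nat.odd_iff] <;>
  rw [Nat.even_iff] at hodd <;> omega

end Hole

lemma exists_shorter_of_not_crossPath {A B : Set V} {u v : V} {p : G.Walk u v} (hp : p.IsPath)
    (hu : u ∈ A) (hv : v ∈ B) (hc : ¬ CrossPath G A B p) :
    ∃ (u' v' : V) (q : G.Walk u' v'), u' ∈ A ∧ v' ∈ B ∧ q.length < p.length ∧
      ∀ z ∈ q.support, z ∈ p.support := by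
  classical
  simp only [CrossPath, IsInducedPath, IsInducedWalk, Interior, hp, hu, hv, true_and,
    not_and_or, not_forall, not_not] at hc
  rcases hc with ⟨x, hx, y, hy, hxy, hxy'⟩ | ⟨z, ⟨hz, hzu, hzv⟩, hzA | hzB⟩
  · obtain ⟨q, hlt, hsub⟩ := exists_shorter_of_adj_of_notMem_edges hx hy hxy hxy'
    exact ⟨u, v, q, hu, hv, hlt, hsub⟩
  · exact ⟨z, v, p.dropUntil z hz, hzA, hv, length_dropUntil_lt_length hz hzu,
      fun w hw => support_dropUntil_subset_support _ _ hw⟩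
  · exact ⟨u, z, p.takeUntil z hz, hu, hzB, length_takeUntil_lt_length hz hzv,
      fun w hw => support_takeUntil_subset_support _ _ hw⟩

lemma exists_crossPath_of_reachIn {X A B : Set V} {a b : V} (ha : a ∈ A) (hb : b ∈ B)
    (hab : ReachIn G X a b) :
    ∃ (u v : V) (p : G.Walk u v), CrossPath G A B p ∧ ∀ z ∈ p.support, z ∈ X := by
  classical
  obtain ⟨w, hwX⟩ := hab
  induction hn : w.length using Nat.strong_induction_on generalizing a b with
  | _ n ih =>
    have hbX : ∀ z ∈ w.bypass.support, z ∈ X :=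
      fun z hz => hwX z (support_bypass_subset_support w hz)
    by_cases hc : CrossPath G A B w.bypass
    · exact ⟨a, b, w.bypass, hc, hbX⟩
    obtain ⟨a', b', q, ha', hb', hlt, hsub⟩ :=
      exists_shorter_of_not_crossPath w.bypass_isPath ha hb hc
    exact ih q.length (hn ▸ hlt.trans_le w.length_bypass_le_length) ha' hb' q
      (fun z hz => hbX z (hsub z hz)) rfl

lemma SideConnected.exists_crossPath {X A B : Set V} (hC : SideConnected G X A B)
    (hA : A.Nonempty) (hAX : A ⊆ X) :
    ∃ (u v : V) (p : G.Walk u v), CrossPath G A B p ∧ ∀ z ∈ p.support, z ∈ X := by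
  obtain ⟨a, ha⟩ := hA
  obtain ⟨b, hb, hab⟩ := (hC a (hAX ha)).2
  exact exists_crossPath_of_reachIn ha hb hab

section TwoJoin

variable {X1 X2 A1 B1 A2 B2 : Set V}

lemma IsTwoJoinSplit.symm (hJ : IsTwoJoinSplit G X1 X2 A1 B1 A2 B2) :
    IsTwoJoinSplit G X2 X1 A2 B2 A1 B1 := by
  obtain ⟨hX, hcov, hA1, hB1, hA2, hB2, hAB1, hAB2, hA1', hB1', hA2', hB2', hAA, hBB, hcross⟩ := hJ
  refine ⟨hX.symm, Set.union_comm X1 X2 ▸ hcov, hA2, hB2, hA1, hB1, hAB2, hAB1, hA2', hB2', hA1',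
    hB1', fun a ha a' ha' => (hAA a' ha' a ha).symm, fun b hb b' hb' => (hBB b' hb' b hb).symm,
    fun x hx y hy hxy => ?_⟩
  rcases hcross y hy x hx hxy.symm with h | h
  exacts [Or.inl h.symm, Or.inr h.symm]

lemma IsTwoJoinSplit.mem_right_of_notMem_left (hJ : IsTwoJoinSplit G X1 X2 A1 B1 A2 B2) {z : V}
    (hz : z ∉ X1) : z ∈ X2 :=
  (hJ.2.1 ▸ Set.mem_univ z : z ∈ X1 ∪ X2).resolve_left hz

lemma IsTwoJoinSplit.even_length_add (hG : ¬ HasOddHole G)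
    (hJ : IsTwoJoinSplit G X1 X2 A1 B1 A2 B2) {a₁ b₁ a₂ b₂ : V} {p : G.Walk a₁ b₁}
    {q : G.Walk a₂ b₂} (hp : CrossPath G A1 B1 p) (hpX : ∀ z ∈ p.support, z ∈ X1)
    (hq : CrossPath G A2 B2 q) (hqX : ∀ z ∈ q.support, z ∈ X2) :
    Even (p.length + q.length) := by
  obtain ⟨hX, -, -, -, -, -, hAB1, hAB2, -, -, -, -, hAA, hBB, hcross⟩ := hJ
  refine even_length_add_of_not_hasOddHole hG hp.1 hq.1
    (fun z hzp hzq => hX.ne_of_mem (hpX z hzp) (hqX z hzq) rfl) (hp.ne hAB1) (hq.ne hAB2)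
    (hAA _ hp.2.1 _ hq.2.1) (hBB _ hp.2.2.1 _ hq.2.2.1).symm fun x hx y hy hxy => ?_
  rcases hcross x (hpX x hx) y (hqX y hy) hxy with ⟨hxA, hyA⟩ | ⟨hxB, hyB⟩
  · exact Or.inl ⟨hp.eq_start_of_mem hAB1 hx hxA, hq.eq_start_of_mem hAB2 hy hyA⟩
  · exact Or.inr ⟨hp.eq_end_of_mem hAB1 hx hxB, hq.eq_end_of_mem hAB2 hy hyB⟩

lemma IsTwoJoinSplit.crossPath_of_cons_concat (hJ : IsTwoJoinSplit G X1 X2 A1 B1 A2 B2)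
    {u x y v : V} {h : G.Adj u x} {q : G.Walk x y} {h' : G.Adj y v}
    (hp : CrossPath G A1 B1 (cons h (q.concat h'))) (hx : x ∉ X1) :
    CrossPath G A2 B2 q ∧ ∀ z ∈ q.support, z ∈ X2 := by
  have hx2 := hJ.mem_right_of_notMem_left hx
  have hmem1 : ∀ z, z ∉ X2 → z ∈ X1 := fun z => hJ.symm.mem_right_of_notMem_left
  obtain ⟨-, -, hA1, hB1, -, -, hAB1, -, -, -, -, -, hAA, hBB, hcross⟩ := hJ
  obtain ⟨⟨hpath, hind⟩, hu, hv, -⟩ := id hp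
  obtain ⟨hqv, huqv⟩ := (cons_isPath_iff h _).mp hpath
  obtain ⟨hqpath, hvq⟩ := (concat_isPath_iff h').mp hqv
  have huq : u ∉ q.support := fun huq => huqv (by simp [huq])
  have hqX : ∀ z ∈ q.support, z ∈ X2 := by
    intro z hz
    refine hqv.mem_of_boundary_only_at_end (S := A1 ∪ B1) hx2 (fun a b ha hb hab => ?_)
      (fun w hw hwS => ?_) (by simp [hz]) (fun hzv => hvq (hzv ▸ hz))
    · exact Or.inr ((hcross b (hmem1 b hb) a ha hab.symm).imp And.left And.left)
    · exact hp.eq_end_of_ne_start (List.mem_cons_of_mem _ hw) (fun hwu => huqv (hwu ▸ hw)) hwS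
  have hxA2 : x ∈ A2 :=
    ((hcross u (hA1 hu) x hx2 h).resolve_right fun h => hAB1.ne_of_mem hu h.1 rfl).2
  have hyB2 : y ∈ B2 :=
    ((hcross v (hB1 hv) y (hqX y (end_mem_support q)) h'.symm).resolve_left
      fun h => hAB1.ne_of_mem h.1 hv rfl).2
  refine ⟨⟨⟨hqpath, hind.of_cons_concat huq hvq⟩, hxA2, hyB2, ?_⟩, hqX⟩
  rintro z ⟨hz, hzx, hzy⟩ (hzA | hzB)
  · refine hzx ?_
    simpa using hpath.eq_snd_of_mem_edges
      (hind u (start_mem_support _) z (by simp [hz]) (hAA u hu z hzA))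
  · refine hzy ?_
    have := hpath.eq_penultimate_of_mem_edges
      (hind v (end_mem_support _) z (by simp [hz]) (hBB v hv z hzB))
    rwa [← concat_cons, penultimate_concat] at this

lemma IsTwoJoinSplit.crossPath_subset_or_exists (hJ : IsTwoJoinSplit G X1 X2 A1 B1 A2 B2)
    {u v : V} {p : G.Walk u v} (hp : CrossPath G A1 B1 p) :
    (∀ z ∈ p.support, z ∈ X1) ∨ ∃ (a b : V) (q : G.Walk a b),
      CrossPath G A2 B2 q ∧ (∀ z ∈ q.support, z ∈ X2) ∧ q.length + 2 = p.length := by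
  obtain ⟨-, -, hA1, hB1, -, -, hAB1, -, -, -, -, -, -, -, hcross⟩ := id hJ
  cases p with
  | nil => exact absurd rfl (hp.ne hAB1)
  | @cons _ x _ h t =>
    by_cases hx : x ∈ X1
    · left
      obtain ⟨ht, hut⟩ := (cons_isPath_iff h t).mp hp.1.1
      intro z hz
      rcases List.mem_cons.mp hz with rfl | hz
      · exact hA1 hp.2.1
      by_cases hzv : z = v
      · exact hzv ▸ hB1 hp.2.2.1
      refine ht.mem_of_boundary_only_at_end hx (fun a b ha hb hab => Or.inl ?_)
        (fun w hw hwS => hp.eq_end_of_ne_start (List.mem_cons_of_mem _ hw)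
          (fun hwu => hut (hwu ▸ hw)) hwS) hz hzv
      exact (hcross a ha b (hJ.mem_right_of_notMem_left hb) hab).imp And.left And.left
    · right
      have hnil : ¬ t.Nil := fun hn => hx (hn.eq ▸ hB1 hp.2.2.1)
      obtain ⟨y, q, h', rfl⟩ : ∃ (y : V) (q : G.Walk x y) (h' : G.Adj y v), t = q.concat h' :=
        ⟨_, _, _, (concat_dropLast (adj_penultimate hnil)).symm⟩
      obtain ⟨hq, hqX⟩ := hJ.crossPath_of_cons_concat hp hx
      exact ⟨_, _, _, hq, hqX, by simp⟩

lemma IsTwoJoinSplit.even_length_iff (hG : ¬ HasOddHole G)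
    (hJ : IsTwoJoinSplit G X1 X2 A1 B1 A2 B2) {a₁ b₁ a₂ b₂ u v : V} {P : G.Walk a₁ b₁}
    {Q : G.Walk a₂ b₂} {r : G.Walk u v} (hP : CrossPath G A1 B1 P)
    (hPX : ∀ z ∈ P.support, z ∈ X1) (hQ : CrossPath G A2 B2 Q) (hQX : ∀ z ∈ Q.support, z ∈ X2)
    (hr : CrossPath G A1 B1 r) : Even r.length ↔ Even Q.length := by
  rcases hJ.crossPath_subset_or_exists hr with hrX | ⟨a, b, q, hq, hqX, hlen⟩
  · exact Nat.even_add.mp (hJ.even_length_add hG hr hrX hQ hQX)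
  · calc Even r.length ↔ Even q.length := by simp [← hlen, Nat.even_add]
      _ ↔ Even P.length := (Nat.even_add.mp (hJ.even_length_add hG hP hPX hq hqX)).symm
      _ ↔ Even Q.length := Nat.even_add.mp (hJ.even_length_add hG hP hPX hQ hQX)

end TwoJoin

end BSP

/-- In a Berge graph with a connected 2-join, all induced paths from `A1` to `B1`
with no interior vertex in `A1 ∪ B1`, and all induced paths from `A2` to `B2` with no interior
vertex in `A2 ∪ B2`, have lengths of the same parity. -/
theorem connected_two_join_path_parity {V : Type*} (G : SimpleGraph V)
    (X1 X2 A1 B1 A2 B2 : Set V)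
    (hBerge : BSP.Berge G)
    (hJ : BSP.IsConnectedTwoJoin G X1 X2 A1 B1 A2 B2) :
    ∀ (u v u' v' : V) (p : G.Walk u v) (q : G.Walk u' v'),
      (BSP.CrossPath G A1 B1 p ∨ BSP.CrossPath G A2 B2 p) →
      (BSP.CrossPath G A1 B1 q ∨ BSP.CrossPath G A2 B2 q) →
      (Even p.length ↔ Even q.length) := by
  obtain ⟨hJ, hC1, hC2⟩ := hJ
  obtain ⟨-, -, hA1, -, hA2, -, -, -, hA1ne, -, hA2ne, -⟩ := id hJ
  obtain ⟨_, _, P, hP, hPX⟩ := hC1.exists_crossPath hA1ne hA1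
  obtain ⟨_, _, Q, hQ, hQX⟩ := hC2.exists_crossPath hA2ne hA2
  have hPQ : Even P.length ↔ Even Q.length :=
    Nat.even_add.mp (hJ.even_length_add hBerge.1 hP hPX hQ hQX)
  have key : ∀ (u v : V) (r : G.Walk u v), BSP.CrossPath G A1 B1 r ∨ BSP.CrossPath G A2 B2 r →
      (Even r.length ↔ Even Q.length) := by
    rintro u v r (hr | hr)
    · exact hJ.even_length_iff hBerge.1 hP hPX hQ hQX hr
    · exact (hJ.symm.even_length_iff hBerge.1 hQ hQX hP hPX hr).trans hPQ
  intro u v u' v' p q hp hq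
  exact (key u v p hp).trans (key u' v' q hq).symm
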